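/- Let (Ω, ℱ, ℙ) be a probability space, let φ : Ω → ℝ^{N} be a square-integrable random vector with 𝔼[φφᵀ] = I_N, and let A : Ω → ℝ^{n×m} be a measurable matrix-valued random variable with ‖A(ω)‖ ≤ ā for ℙ-almost every ω, for some constant ā ≥ 0, such that the integrand below is Bochner integrable. Then ‖𝔼[(φ ⊗ I_n)·A·(φᵀ ⊗ I_m)]‖ ≤ ā, where φ is viewed as an N×1 matrix, so φ ⊗ I_n ∈ ℝ^{Nn×n} and φᵀ ⊗ I_m ∈ ℝ^{m×Nm}. -/

import Mathlib

open Matrix MeasureTheory Kronecker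

/-- The spectral (ℓ² operator) norm of a real matrix. -/
noncomputable def matSpectralNorm {m n : Type*} [Fintype m] [Fintype n] [DecidableEq n]
    (A : Matrix m n ℝ) : ℝ :=
  ‖LinearMap.toContinuousLinearMap (Matrix.toEuclideanLin A)‖

/-- The entrywise expectation of a matrix-valued random variable. -/
noncomputable def matExp {m n : Type*} [Fintype m] [Fintype n]
    {Ω : Type*} [MeasurableSpace Ω] (ℙ : Measure Ω)
    (M : Ω → Matrix m n ℝ) : Matrix m n ℝ :=
  Matrix.of fun i j => ∫ ω, M ω i j ∂ℙ

/-- `φ ⊗ I_n ∈ ℝ^{Nn×n}`, where the vector `φ` is viewed as an `N×1` matrix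
(the column index `Fin 1 × Fin n` is identified with `Fin n`). -/
noncomputable def vecKronId {N n : ℕ} (φ : Fin N → ℝ) :
    Matrix (Fin N × Fin n) (Fin n) ℝ :=
  ((Matrix.replicateCol (Fin 1) φ) ⊗ₖ (1 : Matrix (Fin n) (Fin n) ℝ)).submatrix
    id (fun a => ((0 : Fin 1), a))

/-- `φᵀ ⊗ I_m ∈ ℝ^{m×Nm}`, where the vector `φ` is viewed as an `N×1` matrix
(the row index `Fin 1 × Fin m` is identified with `Fin m`). -/
noncomputable def vecTKronId {N m : ℕ} (φ : Fin N → ℝ) :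
    Matrix (Fin m) (Fin N × Fin m) ℝ :=
  ((Matrix.replicateRow (Fin 1) φ) ⊗ₖ (1 : Matrix (Fin m) (Fin m) ℝ)).submatrix
    (fun b => ((0 : Fin 1), b)) id

lemma aux_dot_le {n m : ℕ} (A : Matrix (Fin n) (Fin m) ℝ) (x : Fin n → ℝ) (y : Fin m → ℝ) :
    x ⬝ᵥ A.mulVec y ≤ matSpectralNorm A * Real.sqrt (∑ a, x a ^ 2) * Real.sqrt (∑ b, y b ^ 2) := by
  set x' : EuclideanSpace ℝ (Fin n) := (WithLp.equiv 2 _).symm x with hx'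
  set y' : EuclideanSpace ℝ (Fin m) := (WithLp.equiv 2 _).symm y with hy'
  have h1 : x ⬝ᵥ A.mulVec y = inner ℝ x' (Matrix.toEuclideanLin A y') := by
    simp [hx', hy', PiLp.inner_apply, RCLike.inner_apply, dotProduct,
      Matrix.toEuclideanLin_apply, Matrix.mulVec]
    exact Finset.sum_congr rfl fun _ _ => mul_comm _ _
  have hnx : ‖x'‖ = Real.sqrt (∑ a, x a ^ 2) := by
    rw [EuclideanSpace.norm_eq]
    congr 1
    refine Finset.sum_congr rfl fun a _ => ?_
    simp [hx', Real.norm_eq_abs, sq_abs]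
  have hny : ‖y'‖ = Real.sqrt (∑ b, y b ^ 2) := by
    rw [EuclideanSpace.norm_eq]
    congr 1
    refine Finset.sum_congr rfl fun b _ => ?_
    simp [hy', Real.norm_eq_abs, sq_abs]
  have h2 : inner ℝ x' (Matrix.toEuclideanLin A y') ≤ ‖x'‖ * ‖Matrix.toEuclideanLin A y'‖ :=
    real_inner_le_norm _ _
  have h3 : ‖Matrix.toEuclideanLin A y'‖ ≤ matSpectralNorm A * ‖y'‖ := by
    have := (LinearMap.toContinuousLinearMap (Matrix.toEuclideanLin A)).le_opNorm y'
    simpa [matSpectralNorm] using this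
  calc x ⬝ᵥ A.mulVec y = inner ℝ x' (Matrix.toEuclideanLin A y') := h1
    _ ≤ ‖x'‖ * ‖Matrix.toEuclideanLin A y'‖ := h2
    _ ≤ ‖x'‖ * (matSpectralNorm A * ‖y'‖) :=
        mul_le_mul_of_nonneg_left h3 (norm_nonneg _)
    _ = matSpectralNorm A * Real.sqrt (∑ a, x a ^ 2) * Real.sqrt (∑ b, y b ^ 2) := by
        rw [hnx, hny]; ring

lemma aux_spectral_le {ι κ : Type*} [Fintype ι] [Fintype κ] [DecidableEq κ]
    (M : Matrix ι κ ℝ) (c : ℝ) (hc : 0 ≤ c)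
    (h : ∀ (u : ι → ℝ) (v : κ → ℝ),
      u ⬝ᵥ M.mulVec v ≤ c * Real.sqrt (∑ p, u p ^ 2) * Real.sqrt (∑ q, v q ^ 2)) :
    matSpectralNorm M ≤ c := by
  rw [matSpectralNorm]
  apply ContinuousLinearMap.opNorm_le_bound _ hc
  intro v
  set w : EuclideanSpace ℝ ι := LinearMap.toContinuousLinearMap (Matrix.toEuclideanLin M) v with hw
  have hwv : (WithLp.equiv 2 (ι → ℝ) w) = M.mulVec (WithLp.equiv 2 (κ → ℝ) v) := by
    simp [hw, Matrix.toEuclideanLin_apply]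
  have hnw : ‖w‖ = Real.sqrt (∑ p, (WithLp.equiv 2 (ι → ℝ) w) p ^ 2) := by
    rw [EuclideanSpace.norm_eq]
    congr 1
    refine Finset.sum_congr rfl fun p _ => by simp [Real.norm_eq_abs, sq_abs]
  have hnv : ‖v‖ = Real.sqrt (∑ q, (WithLp.equiv 2 (κ → ℝ) v) q ^ 2) := by
    rw [EuclideanSpace.norm_eq]
    congr 1
    refine Finset.sum_congr rfl fun q _ => by simp [Real.norm_eq_abs, sq_abs]
  have hsq : ‖w‖ ^ 2 = (WithLp.equiv 2 (ι → ℝ) w) ⬝ᵥ M.mulVec (WithLp.equiv 2 (κ → ℝ) v) := by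
    rw [← hwv, hnw, Real.sq_sqrt (by positivity)]
    simp [dotProduct, sq]
  have key := h (WithLp.equiv 2 (ι → ℝ) w) (WithLp.equiv 2 (κ → ℝ) v)
  rw [← hsq, ← hnw, ← hnv] at key
  rcases eq_or_lt_of_le (norm_nonneg w) with h0 | h0
  · rw [← h0]; positivity
  · nlinarith [norm_nonneg v]

lemma aux_scale {ι κ : Type*} [Fintype ι] [Fintype κ]
    (M : Matrix ι κ ℝ) (c : ℝ)
    (h : ∀ (u : ι → ℝ) (v : κ → ℝ),
      u ⬝ᵥ M.mulVec v ≤ c * ((∑ p, u p ^ 2) + (∑ q, v q ^ 2)) / 2) :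
    ∀ (u : ι → ℝ) (v : κ → ℝ),
      u ⬝ᵥ M.mulVec v ≤ c * Real.sqrt (∑ p, u p ^ 2) * Real.sqrt (∑ q, v q ^ 2) := by
  intro u v
  set a := Real.sqrt (∑ p, u p ^ 2) with ha
  set b := Real.sqrt (∑ q, v q ^ 2) with hb
  have hsu : ∑ p, u p ^ 2 = a ^ 2 := (Real.sq_sqrt (by positivity)).symm
  have hsv : ∑ q, v q ^ 2 = b ^ 2 := (Real.sq_sqrt (by positivity)).symm
  rcases eq_or_lt_of_le (Real.sqrt_nonneg (∑ p, u p ^ 2) : (0:ℝ) ≤ a) with ha0 | ha0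
  · have ha0' : a = 0 := ha0.symm
    have hu : u = 0 := by
      funext p
      have h1 : ∑ p, u p ^ 2 = 0 := by rw [hsu, ha0']; ring
      have := (Finset.sum_eq_zero_iff_of_nonneg (fun p _ => sq_nonneg (u p))).mp h1 p
        (Finset.mem_univ p)
      exact (pow_eq_zero_iff (two_ne_zero)).mp this
    rw [hu, zero_dotProduct, ha0']
    simp
  rcases eq_or_lt_of_le (Real.sqrt_nonneg (∑ q, v q ^ 2) : (0:ℝ) ≤ b) with hb0 | hb0
  · have hb0' : b = 0 := hb0.symm
    have hv : v = 0 := by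
      funext q
      have h1 : ∑ q, v q ^ 2 = 0 := by rw [hsv, hb0']; ring
      have := (Finset.sum_eq_zero_iff_of_nonneg (fun q _ => sq_nonneg (v q))).mp h1 q
        (Finset.mem_univ q)
      exact (pow_eq_zero_iff (two_ne_zero)).mp this
    rw [hv, Matrix.mulVec_zero, dotProduct_zero, hb0']
    simp
  · set t := Real.sqrt (b / a) with ht
    have htpos : 0 < t := Real.sqrt_pos.mpr (by positivity)
    have ht2 : t ^ 2 = b / a := Real.sq_sqrt (by positivity)
    have key := h (t • u) (t⁻¹ • v)
    have hl : (t • u) ⬝ᵥ M.mulVec (t⁻¹ • v) = u ⬝ᵥ M.mulVec v := by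
      rw [Matrix.mulVec_smul, smul_dotProduct, dotProduct_smul]
      rw [smul_eq_mul, smul_eq_mul, ← mul_assoc, mul_inv_cancel₀ htpos.ne', one_mul]
    have hsum1 : ∑ p, (t • u) p ^ 2 = a * b := by
      simp only [Pi.smul_apply, smul_eq_mul, mul_pow, ← Finset.mul_sum, hsu, ht2]
      field_simp
    have hsum2 : ∑ q, (t⁻¹ • v) q ^ 2 = a * b := by
      simp only [Pi.smul_apply, smul_eq_mul, mul_pow, ← Finset.mul_sum, hsv, inv_pow, ht2]
      field_simp
    rw [hl, hsum1, hsum2] at key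
    calc u ⬝ᵥ M.mulVec v ≤ c * (a * b + a * b) / 2 := key
      _ = c * a * b := by ring

lemma vecKronId_apply {N n : ℕ} (φ : Fin N → ℝ) (p : Fin N × Fin n) (a : Fin n) :
    vecKronId φ p a = φ p.1 * (if p.2 = a then 1 else 0) := by
  obtain ⟨i, c⟩ := p
  simp [vecKronId, Matrix.one_apply]

lemma vecTKronId_apply {N m : ℕ} (φ : Fin N → ℝ) (b : Fin m) (q : Fin N × Fin m) :
    vecTKronId φ b q = φ q.1 * (if b = q.2 then 1 else 0) := by
  obtain ⟨j, d⟩ := q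
  simp [vecTKronId, Matrix.one_apply]

lemma vecKronId_tr_mulVec {N n : ℕ} (φ : Fin N → ℝ) (u : Fin N × Fin n → ℝ) (a : Fin n) :
    ((vecKronId φ)ᵀ).mulVec u a = ∑ i, φ i * u (i, a) := by
  simp only [Matrix.mulVec, dotProduct, Matrix.transpose_apply, vecKronId_apply]
  rw [Fintype.sum_prod_type]
  refine Finset.sum_congr rfl fun i _ => ?_
  simp [ite_mul, mul_ite]

lemma vecTKronId_mulVec {N m : ℕ} (φ : Fin N → ℝ) (v : Fin N × Fin m → ℝ) (b : Fin m) :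
    (vecTKronId φ).mulVec v b = ∑ j, φ j * v (j, b) := by
  simp only [Matrix.mulVec, dotProduct, vecTKronId_apply]
  rw [Fintype.sum_prod_type]
  refine Finset.sum_congr rfl fun j _ => ?_
  simp [ite_mul, mul_ite]

lemma dot_triple {N n m : ℕ} (φ : Fin N → ℝ) (A : Matrix (Fin n) (Fin m) ℝ)
    (u : Fin N × Fin n → ℝ) (v : Fin N × Fin m → ℝ) :
    u ⬝ᵥ (vecKronId (n := n) φ * A * vecTKronId (m := m) φ).mulVec v =
      (((vecKronId φ)ᵀ).mulVec u) ⬝ᵥ A.mulVec ((vecTKronId φ).mulVec v) := by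
  rw [← Matrix.mulVec_mulVec, ← Matrix.mulVec_mulVec, Matrix.dotProduct_mulVec,
    Matrix.mulVec_transpose]

lemma sq_sum_expand {N : ℕ} (φ : Fin N → ℝ) (w : Fin N → ℝ) :
    (∑ i, φ i * w i) ^ 2 = ∑ i, ∑ j, (w i * w j) * (φ i * φ j) := by
  rw [sq, Finset.sum_mul_sum]
  exact Finset.sum_congr rfl fun i _ => Finset.sum_congr rfl fun j _ => by ring

/-- If `𝔼[φφᵀ] = I_N` and `‖A(ω)‖ ≤ ā` almost surely, then
`‖𝔼[(φ ⊗ I_n)·A·(φᵀ ⊗ I_m)]‖ ≤ ā`. -/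
theorem norm_expectation_kron_le {N n m : ℕ}
    {Ω : Type*} [MeasurableSpace Ω] (ℙ : Measure Ω) [IsProbabilityMeasure ℙ]
    (φ : Ω → Fin N → ℝ) (A : Ω → Matrix (Fin n) (Fin m) ℝ)
    (hφmeas : ∀ i, Measurable fun ω => φ ω i)
    (hφsq : ∀ i j, Integrable (fun ω => φ ω i * φ ω j) ℙ)
    (hφorth : (Matrix.of fun i j => ∫ ω, φ ω i * φ ω j ∂ℙ) =
      (1 : Matrix (Fin N) (Fin N) ℝ))
    (hAmeas : ∀ a b, Measurable fun ω => A ω a b)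
    (abar : ℝ) (habar : 0 ≤ abar)
    (hAbound : ∀ᵐ ω ∂ℙ, matSpectralNorm (A ω) ≤ abar)
    (hint : ∀ p q, Integrable
      (fun ω => (vecKronId (n := n) (φ ω) * A ω * vecTKronId (m := m) (φ ω)) p q) ℙ) :
    matSpectralNorm (matExp ℙ fun ω => vecKronId (n := n) (φ ω) * A ω * vecTKronId (m := m) (φ ω)) ≤
      abar := by
  have horth' : ∀ i j, ∫ ω, φ ω i * φ ω j ∂ℙ = if i = j then (1:ℝ) else 0 := by
    intro i j
    have := congrFun (congrFun hφorth i) j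
    simpa [Matrix.one_apply] using this
  set F : Ω → Matrix (Fin N × Fin n) (Fin N × Fin m) ℝ :=
    fun ω => vecKronId (n := n) (φ ω) * A ω * vecTKronId (m := m) (φ ω) with hF
  apply aux_spectral_le _ _ habar
  apply aux_scale
  intro u v
  set x : Ω → Fin n → ℝ := fun ω => ((vecKronId (n := n) (φ ω))ᵀ).mulVec u with hx
  set y : Ω → Fin m → ℝ := fun ω => (vecTKronId (m := m) (φ ω)).mulVec v with hy
  -- integrability and value of ∑ x², ∑ y²
  have hXrep : ∀ ω, (∑ a, x ω a ^ 2) =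
      ∑ a, ∑ i, ∑ j, (u (i, a) * u (j, a)) * (φ ω i * φ ω j) := by
    intro ω
    refine Finset.sum_congr rfl fun a _ => ?_
    rw [hx]
    simp only [vecKronId_tr_mulVec]
    exact sq_sum_expand _ _
  have hYrep : ∀ ω, (∑ b, y ω b ^ 2) =
      ∑ b, ∑ i, ∑ j, (v (i, b) * v (j, b)) * (φ ω i * φ ω j) := by
    intro ω
    refine Finset.sum_congr rfl fun b _ => ?_
    rw [hy]
    simp only [vecTKronId_mulVec]
    exact sq_sum_expand _ _
  have hXint : Integrable (fun ω => ∑ a, x ω a ^ 2) ℙ := by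
    simp only [hXrep]
    exact integrable_finset_sum _ fun a _ => integrable_finset_sum _ fun i _ =>
      integrable_finset_sum _ fun j _ => (hφsq i j).const_mul _
  have hYint : Integrable (fun ω => ∑ b, y ω b ^ 2) ℙ := by
    simp only [hYrep]
    exact integrable_finset_sum _ fun b _ => integrable_finset_sum _ fun i _ =>
      integrable_finset_sum _ fun j _ => (hφsq i j).const_mul _
  have hXval : ∫ ω, (∑ a, x ω a ^ 2) ∂ℙ = ∑ p, u p ^ 2 := by
    simp only [hXrep]
    rw [integral_finset_sum _ (fun a _ => integrable_finset_sum _ fun i _ =>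
      integrable_finset_sum _ fun j _ => (hφsq i j).const_mul _)]
    have inner1 : ∀ (a : Fin n) (i : Fin N),
        ∫ ω, (∑ j, (u (i, a) * u (j, a)) * (φ ω i * φ ω j)) ∂ℙ = u (i, a) ^ 2 := by
      intro a i
      rw [integral_finset_sum _ (fun j _ => (hφsq i j).const_mul _)]
      have hj : ∀ j : Fin N, ∫ ω, (u (i, a) * u (j, a)) * (φ ω i * φ ω j) ∂ℙ
          = (u (i, a) * u (j, a)) * (if i = j then (1:ℝ) else 0) := by
        intro j
        rw [integral_const_mul, horth' i j]
      simp only [hj, mul_ite, mul_one, mul_zero, Finset.sum_ite_eq, Finset.mem_univ, if_true]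
      rw [sq]
    have key : ∀ a : Fin n, ∫ ω, (∑ i, ∑ j, (u (i, a) * u (j, a)) * (φ ω i * φ ω j)) ∂ℙ
        = ∑ i : Fin N, u (i, a) ^ 2 := by
      intro a
      rw [integral_finset_sum _ (fun i _ => integrable_finset_sum _ fun j _ =>
        (hφsq i j).const_mul _)]
      exact Finset.sum_congr rfl fun i _ => inner1 a i
    simp only [key]
    rw [Finset.sum_comm]
    exact (Fintype.sum_prod_type (f := fun p => u p ^ 2)).symm
  have hYval : ∫ ω, (∑ b, y ω b ^ 2) ∂ℙ = ∑ q, v q ^ 2 := by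
    simp only [hYrep]
    rw [integral_finset_sum _ (fun b _ => integrable_finset_sum _ fun i _ =>
      integrable_finset_sum _ fun j _ => (hφsq i j).const_mul _)]
    have inner1 : ∀ (b : Fin m) (i : Fin N),
        ∫ ω, (∑ j, (v (i, b) * v (j, b)) * (φ ω i * φ ω j)) ∂ℙ = v (i, b) ^ 2 := by
      intro b i
      rw [integral_finset_sum _ (fun j _ => (hφsq i j).const_mul _)]
      have hj : ∀ j : Fin N, ∫ ω, (v (i, b) * v (j, b)) * (φ ω i * φ ω j) ∂ℙ
          = (v (i, b) * v (j, b)) * (if i = j then (1:ℝ) else 0) := by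
        intro j
        rw [integral_const_mul, horth' i j]
      simp only [hj, mul_ite, mul_one, mul_zero, Finset.sum_ite_eq, Finset.mem_univ, if_true]
      rw [sq]
    have key : ∀ b : Fin m, ∫ ω, (∑ i, ∑ j, (v (i, b) * v (j, b)) * (φ ω i * φ ω j)) ∂ℙ
        = ∑ i : Fin N, v (i, b) ^ 2 := by
      intro b
      rw [integral_finset_sum _ (fun i _ => integrable_finset_sum _ fun j _ =>
        (hφsq i j).const_mul _)]
      exact Finset.sum_congr rfl fun i _ => inner1 b i
    simp only [key]
    rw [Finset.sum_comm]
    exact (Fintype.sum_prod_type (f := fun q => v q ^ 2)).symm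
  -- the integrand g
  have hgrep : (fun ω => u ⬝ᵥ (F ω).mulVec v) =
      fun ω => ∑ p, ∑ q, u p * ((F ω) p q * v q) := by
    funext ω
    simp [dotProduct, Matrix.mulVec, Finset.mul_sum]
  have hgint : Integrable (fun ω => u ⬝ᵥ (F ω).mulVec v) ℙ := by
    rw [hgrep]
    exact integrable_finset_sum _ fun p _ => integrable_finset_sum _ fun q _ =>
      ((hint p q).mul_const (v q)).const_mul (u p)
  have step1 : u ⬝ᵥ (matExp ℙ F).mulVec v = ∫ ω, u ⬝ᵥ (F ω).mulVec v ∂ℙ := by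
    rw [hgrep]
    calc u ⬝ᵥ (matExp ℙ F).mulVec v
        = ∑ p, ∑ q, u p * ((∫ ω, F ω p q ∂ℙ) * v q) := by
          simp [matExp, dotProduct, Matrix.mulVec, Finset.mul_sum]
      _ = ∑ p, ∑ q, ∫ ω, u p * (F ω p q * v q) ∂ℙ := by
          refine Finset.sum_congr rfl fun p _ => Finset.sum_congr rfl fun q _ => ?_
          rw [integral_const_mul, integral_mul_const]
      _ = ∑ p, ∫ ω, ∑ q, u p * (F ω p q * v q) ∂ℙ := by
          refine Finset.sum_congr rfl fun p _ =>
            (integral_finset_sum _ fun q _ => ((hint p q).mul_const (v q)).const_mul (u p)).symm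
      _ = ∫ ω, ∑ p, ∑ q, u p * (F ω p q * v q) ∂ℙ :=
          (integral_finset_sum _ fun p _ => integrable_finset_sum _ fun q _ =>
            ((hint p q).mul_const (v q)).const_mul (u p)).symm
  have hbound : ∀ᵐ ω ∂ℙ, u ⬝ᵥ (F ω).mulVec v ≤
      abar * ((∑ a, x ω a ^ 2) + (∑ b, y ω b ^ 2)) / 2 := by
    filter_upwards [hAbound] with ω hA
    have h1 : u ⬝ᵥ (F ω).mulVec v = x ω ⬝ᵥ (A ω).mulVec (y ω) := dot_triple _ _ _ _
    have h2 := aux_dot_le (A ω) (x ω) (y ω)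
    have hX0 : (0:ℝ) ≤ ∑ a, x ω a ^ 2 := by positivity
    have hY0 : (0:ℝ) ≤ ∑ b, y ω b ^ 2 := by positivity
    have h3 : matSpectralNorm (A ω) * Real.sqrt (∑ a, x ω a ^ 2) * Real.sqrt (∑ b, y ω b ^ 2)
        ≤ abar * Real.sqrt (∑ a, x ω a ^ 2) * Real.sqrt (∑ b, y ω b ^ 2) :=
      mul_le_mul_of_nonneg_right
        (mul_le_mul_of_nonneg_right hA (Real.sqrt_nonneg _)) (Real.sqrt_nonneg _)
    have h4 : abar * Real.sqrt (∑ a, x ω a ^ 2) * Real.sqrt (∑ b, y ω b ^ 2)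
        ≤ abar * ((∑ a, x ω a ^ 2) + (∑ b, y ω b ^ 2)) / 2 := by
      nlinarith [Real.sq_sqrt hX0, Real.sq_sqrt hY0,
        sq_nonneg (Real.sqrt (∑ a, x ω a ^ 2) - Real.sqrt (∑ b, y ω b ^ 2)),
        Real.sqrt_nonneg (∑ a, x ω a ^ 2), Real.sqrt_nonneg (∑ b, y ω b ^ 2)]
    rw [h1]
    exact le_trans h2 (le_trans h3 h4)
  rw [step1]
  calc ∫ ω, u ⬝ᵥ (F ω).mulVec v ∂ℙ
      ≤ ∫ ω, abar * ((∑ a, x ω a ^ 2) + (∑ b, y ω b ^ 2)) / 2 ∂ℙ :=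
        integral_mono_ae hgint (((hXint.add hYint).const_mul abar).div_const 2) hbound
    _ = abar * ((∑ p, u p ^ 2) + (∑ q, v q ^ 2)) / 2 := by
        rw [integral_div, integral_const_mul, integral_add hXint hYint, hXval, hYval]
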